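/- D_{K,N,H₀} is the first positive zero of the model Jacobian J_{K,N,H₀}: let N > 1 and assume either (K > 0 and H₀ ∈ ℝ), or (K = 0 and H₀ < 0), or (K < 0 and H₀ < −√(−K(N−1))). Then J_{K,N,H₀}(θ) > 0 for every θ ∈ [0, D_{K,N,H₀}), and J_{K,N,H₀}(D_{K,N,H₀}) = 0. -/

import Mathlib

noncomputable section

/-- The model Jacobian `J_{K,N,H₀}(θ)`. -/
def modelJacobian (K N H₀ θ : ℝ) : ℝ :=
  if 0 < K then
    max (Real.cos (θ * Real.sqrt (K / (N - 1))) +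
        H₀ / Real.sqrt (K * (N - 1)) * Real.sin (θ * Real.sqrt (K / (N - 1)))) 0 ^ (N - 1)
  else if K = 0 then max (1 + H₀ * θ / (N - 1)) 0 ^ (N - 1)
  else
    max (Real.cosh (θ * Real.sqrt (-K / (N - 1))) +
        H₀ / Real.sqrt (-K * (N - 1)) * Real.sinh (θ * Real.sqrt (-K / (N - 1)))) 0 ^ (N - 1)

/-- The inverse of `coth` on `(1,∞)`: `arcoth(x) = (1/2)·log((x+1)/(x−1))`. -/
def arcoth (x : ℝ) : ℝ := 1 / 2 * Real.log ((x + 1) / (x - 1))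

/-- The model diameter bound `D_{K,N,H₀}`: for `K > 0` it is
`√((N−1)/K)·arccot(−H₀/√(K(N−1)))` with `arccot x = π/2 − arctan x ∈ (0,π)`; for `K = 0`,
`(N−1)/(−H₀)`; and for `K < 0`, `√((N−1)/(−K))·arcoth(−H₀/√(−K(N−1)))`. -/
def modelDiameter (K N H₀ : ℝ) : ℝ :=
  if 0 < K then
    Real.sqrt ((N - 1) / K) * (Real.pi / 2 - Real.arctan (-H₀ / Real.sqrt (K * (N - 1))))
  else if K = 0 then (N - 1) / (-H₀)
  else Real.sqrt ((N - 1) / (-K)) * arcoth (-H₀ / Real.sqrt (-K * (N - 1)))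

/-! In each case `J(θ) = [f(θ s)]₊^{N−1}` with `s = √(|K|/(N−1))` (and `s = 1` if `K = 0`), where
`f` is `cos t + c sin t = √(1+c²) cos(t − arctan c)`, an affine function, or
`cosh t + c sinh t = ((1−c) + (1+c) e^{2t}) / (2eᵗ)`; in each closed form the first zero of `f`
is visible, and rescaling by `s` turns it into `D`. -/

open Real Set

def IsFirstZero (f : ℝ → ℝ) (D : ℝ) : Prop :=
  (∀ θ ∈ Ico 0 D, 0 < f θ) ∧ f D = 0

namespace IsFirstZero

variable {f : ℝ → ℝ} {D : ℝ}

theorem comp_mul (h : IsFirstZero f D) {s : ℝ} (hs : 0 < s) :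
    IsFirstZero (fun θ ↦ f (θ * s)) (D / s) := by
  refine ⟨fun θ ⟨hθ0, hθD⟩ ↦ h.1 _ ⟨by positivity, (lt_div_iff₀ hs).1 hθD⟩, ?_⟩
  simpa only [div_mul_cancel₀ D hs.ne'] using h.2

theorem max_zero_rpow (h : IsFirstZero f D) {p : ℝ} (hp : p ≠ 0) :
    IsFirstZero (fun θ ↦ max (f θ) 0 ^ p) D := by
  refine ⟨fun θ hθ ↦ ?_, by simp only [h.2, max_self, zero_rpow hp]⟩
  have hfθ := h.1 θ hθ
  show 0 < max (f θ) 0 ^ p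
  rw [max_eq_left hfθ.le]
  exact rpow_pos_of_pos hfθ p

end IsFirstZero

theorem sqrt_div_mul_eq_div_sqrt (a b x : ℝ) : √(b / a) * x = x / √(a / b) := by
  rw [← inv_div, sqrt_inv, inv_mul_eq_div]

theorem cos_add_mul_sin_eq (c t : ℝ) :
    cos t + c * sin t = √(1 + c ^ 2) * cos (t - arctan c) := by
  have : 0 < √(1 + c ^ 2) := sqrt_pos.2 (by positivity)
  rw [cos_sub, cos_arctan, sin_arctan]
  field_simp

theorem isFirstZero_cos_add_mul_sin (c : ℝ) :
    IsFirstZero (fun t ↦ cos t + c * sin t) (π / 2 + arctan c) := by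
  simp only [IsFirstZero, cos_add_mul_sin_eq c, add_sub_cancel_right, cos_pi_div_two, mul_zero,
    and_true]
  rintro t ⟨ht0, htT⟩
  refine mul_pos (sqrt_pos.2 (by positivity)) (cos_pos_of_mem_Ioo ⟨?_, by linarith⟩)
  linarith [arctan_lt_pi_div_two c]

theorem isFirstZero_one_add_mul_div {a b : ℝ} (ha : a < 0) (hb : 0 < b) :
    IsFirstZero (fun θ ↦ 1 + a * θ / b) (b / -a) := by
  refine ⟨fun θ ⟨_, hθD⟩ ↦ ?_, by field_simp [ha.ne]; ring⟩
  rw [lt_div_iff₀ (neg_pos.2 ha)] at hθD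
  have : 0 < b + a * θ := by linarith
  calc 0 < (b + a * θ) / b := div_pos this hb
    _ = 1 + a * θ / b := by field_simp

theorem cosh_add_mul_sinh_eq (c t : ℝ) :
    cosh t + c * sinh t = ((1 - c) + (1 + c) * exp (2 * t)) / (2 * exp t) := by
  rw [cosh_eq, sinh_eq, exp_neg, two_mul t, exp_add]
  field_simp
  ring

theorem isFirstZero_cosh_add_mul_sinh {c : ℝ} (hc : c < -1) :
    IsFirstZero (fun t ↦ cosh t + c * sinh t) (arcoth (-c)) := by
  have hratio : 0 < (-c + 1) / (-c - 1) := div_pos (by linarith) (by linarith)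
  have hexp : exp (2 * arcoth (-c)) = (-c + 1) / (-c - 1) := by
    rw [arcoth, ← mul_assoc, show (2 : ℝ) * (1 / 2) = 1 by norm_num, one_mul, exp_log hratio]
  simp only [IsFirstZero, cosh_add_mul_sinh_eq c]
  refine ⟨fun t ⟨_, htT⟩ ↦ div_pos ?_ (by positivity), ?_⟩
  · have : exp (2 * t) < (-c + 1) / (-c - 1) := hexp ▸ exp_lt_exp.2 (by linarith)
    rw [lt_div_iff₀ (by linarith)] at this
    linarith
  · rw [hexp]
    field_simp [show -c - 1 ≠ 0 by linarith]
    ring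

section modelJacobian

variable {K N : ℝ} (H₀ : ℝ)

theorem isFirstZero_modelJacobian_of_pos (hN : 1 < N) (hK : 0 < K) :
    IsFirstZero (modelJacobian K N H₀) (modelDiameter K N H₀) := by
  set c := H₀ / √(K * (N - 1))
  set s := √(K / (N - 1))
  have hs : 0 < s := sqrt_pos.2 (div_pos hK (by linarith))
  have hJ : modelJacobian K N H₀ = fun θ ↦ max (cos (θ * s) + c * sin (θ * s)) 0 ^ (N - 1) := by
    ext θ
    simp only [modelJacobian, if_pos hK, c, s]
  have hD : modelDiameter K N H₀ = (π / 2 + arctan c) / s := by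
    rw [modelDiameter, if_pos hK, neg_div, arctan_neg, sqrt_div_mul_eq_div_sqrt, sub_neg_eq_add]
  rw [hJ, hD]
  exact ((isFirstZero_cos_add_mul_sin c).comp_mul hs).max_zero_rpow (by linarith)

theorem isFirstZero_modelJacobian_of_eq_zero (hN : 1 < N) (hK : K = 0) (hH₀ : H₀ < 0) :
    IsFirstZero (modelJacobian K N H₀) (modelDiameter K N H₀) := by
  have hJ : modelJacobian K N H₀ = fun θ ↦ max (1 + H₀ * θ / (N - 1)) 0 ^ (N - 1) := by
    ext θ
    simp only [modelJacobian, hK, lt_irrefl, if_false, if_true]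
  have hD : modelDiameter K N H₀ = (N - 1) / -H₀ := by
    simp only [modelDiameter, hK, lt_irrefl, if_false, if_true]
  rw [hJ, hD]
  exact (isFirstZero_one_add_mul_div hH₀ (by linarith)).max_zero_rpow (by linarith)

theorem isFirstZero_modelJacobian_of_neg (hN : 1 < N) (hK : K < 0)
    (hH₀ : H₀ < -√(-K * (N - 1))) :
    IsFirstZero (modelJacobian K N H₀) (modelDiameter K N H₀) := by
  set c := H₀ / √(-K * (N - 1))
  set s := √(-K / (N - 1))
  have hs : 0 < s := sqrt_pos.2 (div_pos (by linarith) (by linarith))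
  have hc : c < -1 := by
    have : 0 < √(-K * (N - 1)) := sqrt_pos.2 (mul_pos (by linarith) (by linarith))
    rw [div_lt_iff₀ this]
    linarith
  have hJ : modelJacobian K N H₀ = fun θ ↦ max (cosh (θ * s) + c * sinh (θ * s)) 0 ^ (N - 1) := by
    ext θ
    simp only [modelJacobian, if_neg hK.not_gt, if_neg hK.ne, c, s]
  have hD : modelDiameter K N H₀ = arcoth (-c) / s := by
    rw [modelDiameter, if_neg hK.not_gt, if_neg hK.ne, neg_div, sqrt_div_mul_eq_div_sqrt]
  rw [hJ, hD]
  exact ((isFirstZero_cosh_add_mul_sinh hc).comp_mul hs).max_zero_rpow (by linarith)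

end modelJacobian

/-- `D_{K,N,H₀}` is the first positive zero of the model Jacobian `J_{K,N,H₀}`: the
Jacobian is positive on `[0, D_{K,N,H₀})` and vanishes at `D_{K,N,H₀}`. -/
theorem modelDiameter_first_zero (K N H₀ : ℝ) (hN : 1 < N)
    (hcase : 0 < K ∨ (K = 0 ∧ H₀ < 0) ∨ (K < 0 ∧ H₀ < -Real.sqrt (-K * (N - 1)))) :
    (∀ θ ∈ Set.Ico 0 (modelDiameter K N H₀), 0 < modelJacobian K N H₀ θ) ∧
      modelJacobian K N H₀ (modelDiameter K N H₀) = 0 := by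
  rcases hcase with hK | ⟨hK, hH₀⟩ | ⟨hK, hH₀⟩
  · exact isFirstZero_modelJacobian_of_pos H₀ hN hK
  · exact isFirstZero_modelJacobian_of_eq_zero H₀ hN hK hH₀
  · exact isFirstZero_modelJacobian_of_neg H₀ hN hK hH₀
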